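/- arXiv:2405.06544 — 7 statements merged into one kernel-verified Lean document; each statement's English description precedes it below -/
import Mathlib

section
/- Let d_A, d_B, r be positive integers, let (u_i)_{i<r} be an orthonormal family in ℂ^{d_A} and (v_i)_{i<r} an orthonormal family in ℂ^{d_B}, let λ : Fin r → ℝ be nonnegative, and let ψ = Σ_{i<r} √(λ_i) · (u_i ⊗ v_i) ∈ ℂ^{d_A} ⊗ ℂ^{d_B}. Set ρ_A = Σ_{i<r} λ_i · u_i u_i† (a d_A × d_A matrix). Let P_A be a Hermitian d_A × d_A complex matrix and let P_B be a d_B × d_B complex matrix of operator norm at most 1. Then the real number tr(ρ_A P_A ρ_A P_A) satisfies tr(ρ_A P_A ρ_A P_A) ≥ |⟨ψ, (P_A ⊗ P_B) ψ⟩|² / r. -/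
open scoped Matrix Kronecker
open Matrix

/-!
Write `a i j = ⟨u i, P_A u j⟩` and `n i j = ⟨v i, P_B v j⟩`. Bilinearity gives
`⟨ψ, (P_A ⊗ P_B) ψ⟩ = ∑ i j, √(λ i λ j) a i j n i j`, and since `P_A` is Hermitian,
`tr(ρ_A P_A ρ_A P_A) = ∑ i j, λ i λ j |a i j|²`. By Cauchy–Schwarz the square of the first
is at most the second times `∑ i j, |n i j|²`, and by Bessel's inequality and `‖P_B‖ ≤ 1`
every column `j ↦ (n i j)ᵢ` has squared norm at most `‖v j‖² = 1`, so that sum is at most `r`.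
-/

namespace Matrix

variable {l m n p ι R : Type*}

def vecKronecker [Mul R] (x : m → R) (y : n → R) : m × n → R := fun q => x q.1 * y q.2

theorem star_vecKronecker [CommSemiring R] [StarRing R] (x : m → R) (y : n → R) :
    star (vecKronecker x y) = vecKronecker (star x) (star y) := by
  ext q
  simp [vecKronecker, star_mul']

variable [Fintype m] [Fintype n] [Fintype ι]

theorem kronecker_mulVec_vecKronecker [CommSemiring R] (A : Matrix l m R) (B : Matrix p n R)
    (x : m → R) (y : n → R) :
    (A ⊗ₖ B) *ᵥ vecKronecker x y = vecKronecker (A *ᵥ x) (B *ᵥ y) := by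
  ext q
  simp only [vecKronecker, mulVec, dotProduct, kroneckerMap_apply, Fintype.sum_prod_type,
    Finset.sum_mul_sum]
  exact Finset.sum_congr rfl fun _ _ => Finset.sum_congr rfl fun _ _ => by ring

theorem vecKronecker_dotProduct_vecKronecker [CommSemiring R] (x x' : m → R) (y y' : n → R) :
    vecKronecker x y ⬝ᵥ vecKronecker x' y' = (x ⬝ᵥ x') * (y ⬝ᵥ y') := by
  simp only [vecKronecker, dotProduct, Fintype.sum_prod_type, Finset.sum_mul_sum]
  exact Finset.sum_congr rfl fun _ _ => Finset.sum_congr rfl fun _ _ => by ring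

theorem star_dotProduct_kronecker_mulVec_sum_vecKronecker [CommSemiring R] [StarRing R]
    (A : Matrix m m R) (B : Matrix n n R) (c : ι → R) (x : ι → m → R) (y : ι → n → R) :
    star (∑ i, c i • vecKronecker (x i) (y i)) ⬝ᵥ
        (A ⊗ₖ B) *ᵥ ∑ i, c i • vecKronecker (x i) (y i) =
      ∑ i, ∑ j, star (c i) * c j * ((star (x i) ⬝ᵥ A *ᵥ x j) * (star (y i) ⬝ᵥ B *ᵥ y j)) := by
  simp only [star_sum, star_smul, mulVec_sum, mulVec_smul, sum_dotProduct, dotProduct_sum,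
    smul_dotProduct, dotProduct_smul, star_vecKronecker, kronecker_mulVec_vecKronecker,
    vecKronecker_dotProduct_vecKronecker, smul_eq_mul, Finset.mul_sum]
  rw [Finset.sum_comm]
  exact Finset.sum_congr rfl fun _ _ => Finset.sum_congr rfl fun _ _ => by ring

theorem trace_mul_mul_mul_of_eq_sum_vecMulVec [CommSemiring R] {ρ : Matrix m m R} {c : ι → R}
    {x y : ι → m → R} (hρ : ρ = ∑ i, c i • vecMulVec (x i) (y i)) (P : Matrix m m R) :
    trace (ρ * P * ρ * P) =
      ∑ i, ∑ j, c i * c j * ((y i ⬝ᵥ P *ᵥ x j) * (y j ⬝ᵥ P *ᵥ x i)) := by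
  subst hρ
  simp only [Finset.sum_mul, Finset.mul_sum, smul_mul, vecMulVec_mul, trace_sum, trace_smul,
    trace_vecMulVec, vecMul_smul, vecMul_vecMulVec, smul_vecMul, dotProduct_smul, smul_eq_mul,
    ← dotProduct_mulVec]
  rw [Finset.sum_comm]
  refine Finset.sum_congr rfl fun i _ => Finset.sum_congr rfl fun j _ => ?_
  rw [dotProduct_comm (x i), ← dotProduct_mulVec]
  ring

theorem IsHermitian.star_star_dotProduct_mulVec [CommSemiring R] [StarRing R]
    {A : Matrix m m R} (hA : A.IsHermitian) (x y : m → R) :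
    star (star x ⬝ᵥ A *ᵥ y) = star y ⬝ᵥ A *ᵥ x := by
  rw [star_dotProduct, star_star, dotProduct_mulVec, star_mulVec, hA.eq]

theorem IsHermitian.trace_mul_mul_mul_eq_sum_norm_sq {𝕜 : Type*} [RCLike 𝕜]
    {ρ P : Matrix m m 𝕜} (hP : P.IsHermitian) {lam : ι → ℝ} {u : ι → m → 𝕜}
    (hρ : ρ = ∑ i, (lam i : 𝕜) • vecMulVec (u i) (star (u i))) :
    trace (ρ * P * ρ * P) =
      ((∑ i, ∑ j, lam i * lam j * ‖star (u i) ⬝ᵥ P *ᵥ u j‖ ^ 2 : ℝ) : 𝕜) := by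
  rw [trace_mul_mul_mul_of_eq_sum_vecMulVec hρ]
  push_cast
  refine Finset.sum_congr rfl fun i _ => Finset.sum_congr rfl fun j _ => ?_
  rw [← hP.star_star_dotProduct_mulVec (u i) (u j), RCLike.star_def, RCLike.mul_conj]

end Matrix

theorem norm_sum_mul_sq_le {κ 𝕜 : Type*} [Fintype κ] [SeminormedRing 𝕜] (f g : κ → 𝕜) :
    ‖∑ k, f k * g k‖ ^ 2 ≤ (∑ k, ‖f k‖ ^ 2) * ∑ k, ‖g k‖ ^ 2 :=
  calc ‖∑ k, f k * g k‖ ^ 2 ≤ (∑ k, ‖f k‖ * ‖g k‖) ^ 2 := by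
        gcongr
        exact (norm_sum_le _ _).trans (Finset.sum_le_sum fun k _ => norm_mul_le _ _)
    _ ≤ (∑ k, ‖f k‖ ^ 2) * ∑ k, ‖g k‖ ^ 2 := Finset.sum_mul_sq_le_sq_mul_sq _ _ _

section Orthonormal

open WithLp

variable {ι n 𝕜 : Type*} [Fintype n] [RCLike 𝕜]

theorem orthonormal_toLp_iff [DecidableEq ι] {v : ι → n → 𝕜} :
    Orthonormal 𝕜 (fun i => toLp 2 (v i)) ↔
      ∀ i j, star (v i) ⬝ᵥ v j = if i = j then 1 else 0 := by
  simp only [orthonormal_iff_ite, EuclideanSpace.inner_toLp_toLp, dotProduct_comm (v _)]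

theorem sum_sum_norm_sq_star_dotProduct_mulVec_le [Fintype ι] {v : ι → n → 𝕜}
    (hv : Orthonormal 𝕜 fun i => toLp 2 (v i)) {B : Matrix n n 𝕜}
    (hB : ∀ z, ‖toLp 2 (B *ᵥ z)‖ ≤ ‖toLp 2 z‖) :
    ∑ i, ∑ j, ‖star (v i) ⬝ᵥ B *ᵥ v j‖ ^ 2 ≤ Fintype.card ι := by
  rw [Finset.sum_comm]
  calc _ ≤ ∑ _j : ι, (1 : ℝ) := Finset.sum_le_sum fun j _ => ?_
    _ = Fintype.card ι := by simp
  calc ∑ i, ‖star (v i) ⬝ᵥ B *ᵥ v j‖ ^ 2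
        = ∑ i, ‖inner 𝕜 (toLp 2 (v i)) (toLp 2 (B *ᵥ v j))‖ ^ 2 := by
        simp only [EuclideanSpace.inner_toLp_toLp, dotProduct_comm (B *ᵥ v j)]
    _ ≤ ‖toLp 2 (B *ᵥ v j)‖ ^ 2 := hv.sum_inner_products_le _
    _ ≤ ‖toLp 2 (v j)‖ ^ 2 := by gcongr; exact hB _
    _ = 1 := by rw [hv.1 j, one_pow]

end Orthonormal

theorem schmidt_rank_marginal_bound_general
    (dA dB r : ℕ)
    (u : Fin r → Fin dA → ℂ) (v : Fin r → Fin dB → ℂ)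
    (hv : ∀ i j, ∑ b, (starRingEnd ℂ) (v i b) * v j b = if i = j then 1 else 0)
    (lam : Fin r → ℝ) (hlam : ∀ i, 0 ≤ lam i)
    (ψ : Fin dA × Fin dB → ℂ)
    (hψ : ∀ p, ψ p = ∑ i, (Real.sqrt (lam i) : ℂ) * u i p.1 * v i p.2)
    (ρA : Matrix (Fin dA) (Fin dA) ℂ)
    (hρA : ρA = ∑ i, ((lam i : ℝ) : ℂ) •
      Matrix.of (fun a b => u i a * (starRingEnd ℂ) (u i b)))
    (PA : Matrix (Fin dA) (Fin dA) ℂ) (hPA : PA.IsHermitian)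
    (PB : Matrix (Fin dB) (Fin dB) ℂ)
    (hPB : ∀ z : Fin dB → ℂ,
      ∑ b, Complex.normSq (PB.mulVec z b) ≤ ∑ b, Complex.normSq (z b)) :
    Complex.normSq (∑ p, (starRingEnd ℂ) (ψ p) * ((PA ⊗ₖ PB).mulVec ψ p)) / r
      ≤ (Matrix.trace (ρA * PA * ρA * PA)).re := by
  set c : Fin r → ℂ := fun i => (Real.sqrt (lam i) : ℂ)
  set a : Fin r → Fin r → ℂ := fun i j => star (u i) ⬝ᵥ PA *ᵥ u j
  set n : Fin r → Fin r → ℂ := fun i j => star (v i) ⬝ᵥ PB *ᵥ v j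
  have hψ_sum : ψ = ∑ i, c i • vecKronecker (u i) (v i) := by
    ext p
    simp [hψ, c, vecKronecker, Finset.sum_apply, mul_assoc]
  have hinner : ∑ p, (starRingEnd ℂ) (ψ p) * ((PA ⊗ₖ PB) *ᵥ ψ) p =
      ∑ q : Fin r × Fin r, (star (c q.1) * c q.2 * a q.1 q.2) * n q.1 q.2 := by
    change star ψ ⬝ᵥ (PA ⊗ₖ PB) *ᵥ ψ = _
    rw [Fintype.sum_prod_type, hψ_sum, star_dotProduct_kronecker_mulVec_sum_vecKronecker]
    simp only [mul_assoc, a, n]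
  have htrace : (trace (ρA * PA * ρA * PA)).re =
      ∑ q : Fin r × Fin r, ‖star (c q.1) * c q.2 * a q.1 q.2‖ ^ 2 := by
    rw [hPA.trace_mul_mul_mul_eq_sum_norm_sq hρA, ← RCLike.re_to_complex, RCLike.ofReal_re,
      Fintype.sum_prod_type]
    refine Finset.sum_congr rfl fun i _ => Finset.sum_congr rfl fun j _ => ?_
    simp only [a, c, norm_mul, norm_star, Complex.norm_real,
      Real.norm_of_nonneg (Real.sqrt_nonneg _), mul_pow, Real.sq_sqrt (hlam _)]
  have hn : ∑ q : Fin r × Fin r, ‖n q.1 q.2‖ ^ 2 ≤ r := by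
    have hPB_contraction : ∀ z, ‖WithLp.toLp 2 (PB *ᵥ z)‖ ≤ ‖WithLp.toLp 2 z‖ := fun z => by
      rw [← pow_le_pow_iff_left₀ (norm_nonneg _) (norm_nonneg _) two_ne_zero]
      simpa only [EuclideanSpace.norm_sq_eq, Complex.normSq_eq_norm_sq] using hPB z
    rw [Fintype.sum_prod_type]
    simpa using
      sum_sum_norm_sq_star_dotProduct_mulVec_le (orthonormal_toLp_iff.2 hv) hPB_contraction
  refine div_le_of_le_mul₀ r.cast_nonneg (htrace ▸ by positivity) ?_
  calc Complex.normSq _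
        = ‖∑ q : Fin r × Fin r, (star (c q.1) * c q.2 * a q.1 q.2) * n q.1 q.2‖ ^ 2 := by
        rw [Complex.normSq_eq_norm_sq, hinner]
    _ ≤ _ := norm_sum_mul_sq_le _ _
    _ ≤ _ := by rw [htrace]; gcongr

/-- Bounding marginals via the Schmidt rank: if `ψ = Σ_i √λ_i u_i ⊗ v_i` has Schmidt
rank at most `r`, `ρ_A = Σ_i λ_i u_i u_i†`, `P_A` is Hermitian, and `P_B` has operator
norm at most `1`, then `tr(ρ_A P_A ρ_A P_A) ≥ |⟨ψ, (P_A ⊗ P_B)ψ⟩|²/r`. -/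
theorem schmidt_rank_marginal_bound
    (dA dB r : ℕ) (hdA : 0 < dA) (hdB : 0 < dB) (hr : 0 < r)
    (u : Fin r → Fin dA → ℂ) (v : Fin r → Fin dB → ℂ)
    (hu : ∀ i j, ∑ a, (starRingEnd ℂ) (u i a) * u j a = if i = j then 1 else 0)
    (hv : ∀ i j, ∑ b, (starRingEnd ℂ) (v i b) * v j b = if i = j then 1 else 0)
    (lam : Fin r → ℝ) (hlam : ∀ i, 0 ≤ lam i)
    (ψ : Fin dA × Fin dB → ℂ)
    (hψ : ∀ p, ψ p = ∑ i, (Real.sqrt (lam i) : ℂ) * u i p.1 * v i p.2)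
    (ρA : Matrix (Fin dA) (Fin dA) ℂ)
    (hρA : ρA = ∑ i, ((lam i : ℝ) : ℂ) •
      Matrix.of (fun a b => u i a * (starRingEnd ℂ) (u i b)))
    (PA : Matrix (Fin dA) (Fin dA) ℂ) (hPA : PA.IsHermitian)
    (PB : Matrix (Fin dB) (Fin dB) ℂ)
    (hPB : ∀ z : Fin dB → ℂ,
      ∑ b, Complex.normSq (PB.mulVec z b) ≤ ∑ b, Complex.normSq (z b)) :
    Complex.normSq (∑ p, (starRingEnd ℂ) (ψ p) * ((PA ⊗ₖ PB).mulVec ψ p)) / r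
      ≤ (Matrix.trace (ρA * PA * ρA * PA)).re :=
  schmidt_rank_marginal_bound_general dA dB r u v hv lam hlam ψ hψ ρA hρA PA hPA PB hPB
end

section
/- Let r be real with 0 < r < 1 and let C_r = {(x,y) ∈ [−1,1]² : x² + y² ≥ r²}. Define G : ℝ² → ℝ by G(x,y) = (x+y)² / (2(x²+y²)). Then G is Lipschitz continuous on C_r with Lipschitz constant at most 1/r: for all (x,y), (x',y') ∈ C_r, |G(x,y) − G(x',y')| ≤ (1/r) · √((x−x')² + (y−y')²). -/
/-!
Writing `p = (x, y)` and `q = (x', y')`, the difference `G p - G q` factors as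
`(x' y - x y') (x x' - y y') / (|p|² |q|²)`. The first factor is the cross product of `q` with
`p - q`, the second the dot product of `p` with the reflection of `q`, so by Cauchy–Schwarz
their product is at most `|q| |p - q| · |p| |q|`, giving `|G p - G q| ≤ |p - q| / |p|`.
On `C_r` we have `|p| ≥ r`.
-/

open Real

lemma abs_mul_add_mul_le_sqrt_mul_sqrt (a b c d : ℝ) :
    |a * c + b * d| ≤ √(a ^ 2 + b ^ 2) * √(c ^ 2 + d ^ 2) := by
  rw [← sqrt_mul (by positivity)]
  exact abs_le_sqrt (by nlinarith [sq_nonneg (a * d - b * c)])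

noncomputable def symEstimator (x y : ℝ) : ℝ := (x + y) ^ 2 / (2 * (x ^ 2 + y ^ 2))

lemma symEstimator_sub {x y x' y' : ℝ} (h : x ^ 2 + y ^ 2 ≠ 0) (h' : x' ^ 2 + y' ^ 2 ≠ 0) :
    symEstimator x y - symEstimator x' y' =
      (x' * y - x * y') * (x * x' - y * y') / ((x ^ 2 + y ^ 2) * (x' ^ 2 + y' ^ 2)) := by
  unfold symEstimator
  field_simp
  ring

lemma abs_symEstimator_sub_le {x y x' y' : ℝ} (h : 0 < x ^ 2 + y ^ 2) (h' : 0 < x' ^ 2 + y' ^ 2) :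
    |symEstimator x y - symEstimator x' y'| ≤ √((x - x') ^ 2 + (y - y') ^ 2) / √(x ^ 2 + y ^ 2) := by
  set ρ := √(x ^ 2 + y ^ 2)
  set ρ' := √(x' ^ 2 + y' ^ 2)
  set δ := √((x - x') ^ 2 + (y - y') ^ 2)
  have hρ : 0 < ρ := sqrt_pos.mpr h
  have hρ' : 0 < ρ' := sqrt_pos.mpr h'
  have hcross : |x' * y - x * y'| ≤ ρ' * δ := by
    have := abs_mul_add_mul_le_sqrt_mul_sqrt x' (-y') (y - y') (x - x')
    rwa [neg_sq, add_comm ((y - y') ^ 2), show x' * (y - y') + -y' * (x - x') = x' * y - x * y' by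
      ring] at this
  have hdot : |x * x' - y * y'| ≤ ρ * ρ' := by
    have := abs_mul_add_mul_le_sqrt_mul_sqrt x y x' (-y')
    rwa [neg_sq, mul_neg, ← sub_eq_add_neg] at this
  rw [symEstimator_sub h.ne' h'.ne', abs_div, abs_mul, abs_of_pos (mul_pos h h'),
    ← sq_sqrt h.le, ← sq_sqrt h'.le]
  calc |x' * y - x * y'| * |x * x' - y * y'| / (ρ ^ 2 * ρ' ^ 2)
      ≤ ρ' * δ * (ρ * ρ') / (ρ ^ 2 * ρ' ^ 2) := by gcongr
    _ = δ / ρ := by field_simp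

theorem G_lipschitz_on_Cr_general (r : ℝ) (hr0 : 0 < r)
    (x y x' y' : ℝ)
    (h1 : r ^ 2 ≤ x ^ 2 + y ^ 2) (h2 : r ^ 2 ≤ x' ^ 2 + y' ^ 2) :
    |(x + y) ^ 2 / (2 * (x ^ 2 + y ^ 2)) - (x' + y') ^ 2 / (2 * (x' ^ 2 + y' ^ 2))|
      ≤ (1 / r) * Real.sqrt ((x - x') ^ 2 + (y - y') ^ 2) := by
  have hr2 : 0 < r ^ 2 := by positivity
  have hr : r ≤ √(x ^ 2 + y ^ 2) := le_sqrt_of_sq_le h1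
  calc |symEstimator x y - symEstimator x' y'|
      ≤ √((x - x') ^ 2 + (y - y') ^ 2) / √(x ^ 2 + y ^ 2) :=
        abs_symEstimator_sub_le (hr2.trans_le h1) (hr2.trans_le h2)
    _ ≤ √((x - x') ^ 2 + (y - y') ^ 2) / r := by gcongr
    _ = (1 / r) * √((x - x') ^ 2 + (y - y') ^ 2) := by ring

/-- The symmetric-estimator function `G(x,y) = (x+y)²/(2(x²+y²))` is Lipschitz with
constant at most `1/r` on the set `C_r = {(x,y) ∈ [−1,1]² : x² + y² ≥ r²}`. -/
theorem G_lipschitz_on_Cr (r : ℝ) (hr0 : 0 < r) (hr1 : r < 1)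
    (x y x' y' : ℝ)
    (hx : x ∈ Set.Icc (-1 : ℝ) 1) (hy : y ∈ Set.Icc (-1 : ℝ) 1)
    (hx' : x' ∈ Set.Icc (-1 : ℝ) 1) (hy' : y' ∈ Set.Icc (-1 : ℝ) 1)
    (h1 : r ^ 2 ≤ x ^ 2 + y ^ 2) (h2 : r ^ 2 ≤ x' ^ 2 + y' ^ 2) :
    |(x + y) ^ 2 / (2 * (x ^ 2 + y ^ 2)) - (x' + y') ^ 2 / (2 * (x' ^ 2 + y' ^ 2))|
      ≤ (1 / r) * Real.sqrt ((x - x') ^ 2 + (y - y') ^ 2) :=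
  G_lipschitz_on_Cr_general r hr0 x y x' y' h1 h2
end

section
/- Let ψ, φ ∈ ℂ^{2^n} be unit vectors, set ρ = ψψ† and σ = φφ†, and let α_ρ(x) = tr(ρP_x) and α_σ(x) = tr(σP_x) (real numbers). Then, with the convention that a summand equals 0 whenever α_ρ(x)² + α_σ(x)² = 0, Σ_{x ∈ ({0,1}²)^n} [(α_ρ(x)² + α_σ(x)²)/2^{n+1}] · [(α_ρ(x) + α_σ(x))² / (2(α_ρ(x)² + α_σ(x)²))] = (1 + tr(ρσ))/2 = (1 + |⟨ψ,φ⟩|²)/2. -/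
/-!
The mixture weight `(α_ρ² + α_σ²)/2^(n+1)` cancels the denominator of the estimator, so the sum is
`2^-(n+2) ∑ₓ (α_ρ(x) + α_σ(x))²`. Pauli strings are orthogonal for the Hilbert–Schmidt inner
product: `∑ₓ P_x(a,b) P_x(c,d) = 2ⁿ δ_ad δ_bc`, hence `∑ₓ tr(P_x A) tr(P_x B) = 2ⁿ tr(AB)`.
For pure states this gives `∑ α_ρ² = ∑ α_σ² = 2ⁿ` and `∑ α_ρ α_σ = 2ⁿ tr(ρσ)`, and
`tr(ρσ) = |⟨ψ,φ⟩|²`.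
-/

open scoped Matrix Kronecker
open Matrix

noncomputable def pauli1 (vw : Bool × Bool) : Matrix (Fin 2) (Fin 2) ℂ :=
  (Complex.I ^ (vw.1 && vw.2).toNat) •
    ((!![0, 1; 1, 0] : Matrix (Fin 2) (Fin 2) ℂ) ^ vw.1.toNat *
      (!![1, 0; 0, -1] : Matrix (Fin 2) (Fin 2) ℂ) ^ vw.2.toNat)

/-- The `n`-qubit Pauli string `P_x = ⊗_i i^{v_i w_i} X^{v_i} Z^{w_i}`,
realized as a matrix indexed by `Fin n → Fin 2` (the Kronecker product of the
single-qubit factors). -/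
noncomputable def pauliString {n : ℕ} (x : Fin n → Bool × Bool) :
    Matrix (Fin n → Fin 2) (Fin n → Fin 2) ℂ :=
  Matrix.of fun a b => ∏ i, pauli1 (x i) (a i) (b i)

/-- The outer product `ψψ†`. -/
noncomputable def outer {ι : Type} (ψ : ι → ℂ) : Matrix ι ι ℂ :=
  Matrix.of fun a b => ψ a * (starRingEnd ℂ) (ψ b)

/-- `α_ψ(x) = tr(P_x ψψ†)`, a real number. -/
noncomputable def alpha {n : ℕ} (ψ : (Fin n → Fin 2) → ℂ) (x : Fin n → Bool × Bool) : ℝ :=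
  (Matrix.trace (pauliString x * outer ψ)).re

open Finset

lemma sum_pauli1_apply_mul_pauli1_apply (a b c d : Fin 2) :
    ∑ vw : Bool × Bool, pauli1 vw a b * pauli1 vw c d = if a = d ∧ b = c then 2 else 0 := by
  rw [Fintype.sum_prod_type]
  fin_cases a <;> fin_cases b <;> fin_cases c <;> fin_cases d <;>
    simp [pauli1, Matrix.mul_apply] <;> norm_num

lemma sum_pauliString_apply_mul_pauliString_apply {n : ℕ} (a b c d : Fin n → Fin 2) :
    ∑ x : Fin n → Bool × Bool, pauliString x a b * pauliString x c d =
      if a = d ∧ b = c then 2 ^ n else 0 := by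
  simp only [pauliString, of_apply, ← prod_mul_distrib]
  rw [← Fintype.prod_sum fun i vw => pauli1 vw (a i) (b i) * pauli1 vw (c i) (d i)]
  simp only [sum_pauli1_apply_mul_pauli1_apply, Fintype.prod_ite_zero, prod_const, card_univ,
    Fintype.card_fin, forall_and, ← funext_iff]

lemma trace_mul_eq_sum {m n R : Type*} [Fintype m] [Fintype n] [NonUnitalNonAssocSemiring R]
    (A : Matrix m n R) (B : Matrix n m R) :
    trace (A * B) = ∑ a, ∑ b, A a b * B b a := by
  simp [trace, mul_apply]

lemma sum_trace_pauliString_mul_mul_trace_pauliString_mul {n : ℕ}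
    (A B : Matrix (Fin n → Fin 2) (Fin n → Fin 2) ℂ) :
    ∑ x : Fin n → Bool × Bool, trace (pauliString x * A) * trace (pauliString x * B) =
      2 ^ n * trace (A * B) := by
  calc ∑ x : Fin n → Bool × Bool, trace (pauliString x * A) * trace (pauliString x * B)
      = ∑ a, ∑ b, ∑ c, ∑ d,
          (∑ x : Fin n → Bool × Bool, pauliString x c d * pauliString x a b) *
            (A d c * B b a) := by
        simp only [trace_mul_eq_sum, sum_mul, mul_sum]
        simp_rw [sum_comm (γ := Fin n → Bool × Bool)]
        ac_rfl
    _ = 2 ^ n * trace (A * B) := by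
        simp [sum_pauliString_apply_mul_pauliString_apply, ite_and, trace_mul_eq_sum, mul_sum]

lemma pauli1_isHermitian (vw : Bool × Bool) : (pauli1 vw).IsHermitian := by
  ext a b
  obtain ⟨v, w⟩ := vw
  fin_cases a <;> fin_cases b <;> cases v <;> cases w <;> simp [pauli1]

lemma pauliString_isHermitian {n : ℕ} (x : Fin n → Bool × Bool) :
    (pauliString x).IsHermitian := by
  ext a b
  simp only [pauliString, conjTranspose_apply, of_apply, star_prod]
  exact prod_congr rfl fun i _ => (pauli1_isHermitian (x i)).apply (a i) (b i)

lemma outer_isHermitian {ι : Type} (ψ : ι → ℂ) : (outer ψ).IsHermitian := by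
  ext a b
  simp [outer, mul_comm]

lemma Matrix.IsHermitian.star_trace_mul {ι R : Type*} [Fintype ι] [NonUnitalCommSemiring R]
    [StarRing R] {A B : Matrix ι ι R} (hA : A.IsHermitian) (hB : B.IsHermitian) :
    star (trace (A * B)) = trace (A * B) := by
  rw [← trace_conjTranspose, conjTranspose_mul, hA.eq, hB.eq, trace_mul_comm]

lemma ofReal_alpha {n : ℕ} (ψ : (Fin n → Fin 2) → ℂ) (x : Fin n → Bool × Bool) :
    (alpha ψ x : ℂ) = trace (pauliString x * outer ψ) :=
  Complex.conj_eq_iff_re.mp <|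
    (pauliString_isHermitian x).star_trace_mul (outer_isHermitian ψ)

lemma sum_alpha_mul_alpha {n : ℕ} (ψ φ : (Fin n → Fin 2) → ℂ) :
    ∑ x : Fin n → Bool × Bool, alpha ψ x * alpha φ x =
      2 ^ n * (trace (outer ψ * outer φ)).re := by
  have h := congrArg Complex.re
    (sum_trace_pauliString_mul_mul_trace_pauliString_mul (outer ψ) (outer φ))
  rw [← Complex.ofReal_ofNat, ← Complex.ofReal_pow, Complex.re_ofReal_mul] at h
  simp_rw [← ofReal_alpha] at h
  exact_mod_cast h

lemma trace_outer_mul_outer {ι : Type} [Fintype ι] (ψ φ : ι → ℂ) :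
    trace (outer ψ * outer φ) = Complex.normSq (∑ a, (starRingEnd ℂ) (ψ a) * φ a) := by
  rw [Complex.normSq_eq_conj_mul_self, trace_mul_eq_sum, map_sum, sum_mul_sum]
  simp only [outer, of_apply, map_mul, Complex.conj_conj]
  exact sum_congr rfl fun _ _ => sum_congr rfl fun _ _ => by ring

lemma sum_alpha_sq {n : ℕ} (ψ : (Fin n → Fin 2) → ℂ) (hψ : ∑ a, Complex.normSq (ψ a) = 1) :
    ∑ x : Fin n → Bool × Bool, alpha ψ x ^ 2 = 2 ^ n := by
  have hnorm : ∑ a, (starRingEnd ℂ) (ψ a) * ψ a = 1 := by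
    simp_rw [← Complex.normSq_eq_conj_mul_self]
    exact_mod_cast hψ
  simp_rw [sq, sum_alpha_mul_alpha, trace_outer_mul_outer, hnorm]
  simp

lemma sq_add_sq_div_mul_add_sq_div (c u v : ℝ) :
    (u ^ 2 + v ^ 2) / c * ((u + v) ^ 2 / (2 * (u ^ 2 + v ^ 2))) = (u + v) ^ 2 / (2 * c) := by
  rcases eq_or_ne (u ^ 2 + v ^ 2) 0 with h | h
  · obtain ⟨rfl, rfl⟩ : u = 0 ∧ v = 0 := by
      constructor <;> nlinarith [sq_nonneg u, sq_nonneg v]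
    simp
  · field_simp

/-- Key identity of the symmetric protocol: the expectation of the bounded estimator
`G(α_ρ(x), α_σ(x)) = (α_ρ+α_σ)²/(2(α_ρ²+α_σ²))` under the mixture distribution
`p_mix = (p_ρ + p_σ)/2` equals `(1 + tr(ρσ))/2 = (1 + |⟨ψ,φ⟩|²)/2`.
(Summands with `α_ρ(x)² + α_σ(x)² = 0` vanish, consistent with the convention,
since in Lean division by zero is zero.) -/
theorem symmetric_estimator_identity (n : ℕ)
    (ψ φ : (Fin n → Fin 2) → ℂ)
    (hψ : ∑ a, Complex.normSq (ψ a) = 1)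
    (hφ : ∑ a, Complex.normSq (φ a) = 1) :
    (∑ x : Fin n → Bool × Bool,
        (((alpha ψ x) ^ 2 + (alpha φ x) ^ 2) / 2 ^ (n + 1)) *
          ((alpha ψ x + alpha φ x) ^ 2 / (2 * ((alpha ψ x) ^ 2 + (alpha φ x) ^ 2))))
        = (1 + (Matrix.trace (outer ψ * outer φ)).re) / 2 ∧
      (1 + (Matrix.trace (outer ψ * outer φ)).re) / 2
        = (1 + Complex.normSq (∑ a, (starRingEnd ℂ) (ψ a) * φ a)) / 2 := by
  refine ⟨?_, by rw [trace_outer_mul_outer, Complex.ofReal_re]⟩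
  calc _ = (∑ x : Fin n → Bool × Bool, (alpha ψ x + alpha φ x) ^ 2) / (2 * 2 ^ (n + 1)) := by
        simp_rw [sq_add_sq_div_mul_add_sq_div, sum_div]
    _ = (∑ x : Fin n → Bool × Bool, alpha ψ x ^ 2
          + 2 * ∑ x : Fin n → Bool × Bool, alpha ψ x * alpha φ x
          + ∑ x : Fin n → Bool × Bool, alpha φ x ^ 2) / (2 * 2 ^ (n + 1)) := by
        simp_rw [add_sq, sum_add_distrib, mul_assoc, mul_sum]
    _ = (2 ^ n + 2 * (2 ^ n * (trace (outer ψ * outer φ)).re) + 2 ^ n) / (2 * 2 ^ (n + 1)) := by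
        rw [sum_alpha_sq ψ hψ, sum_alpha_sq φ hφ, sum_alpha_mul_alpha]
    _ = _ := by
        field_simp
        ring
end

section
/- Let ψ ∈ ℂ^{2^n} be a unit vector, set ρ = ψψ†, and let σ be any Hermitian 2^n × 2^n complex matrix. Write α_ρ(x) = tr(ρP_x), α_σ(x) = tr(σP_x), and p_ρ(x) = α_ρ(x)²/2^n. Then, with the convention that a summand equals 0 whenever α_ρ(x) = 0, Σ_{x ∈ ({0,1}²)^n} p_ρ(x) · (α_σ(x)/α_ρ(x)) = tr(ρσ). -/
open scoped Matrix Kronecker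
open Matrix

/-!
Since `P_x` and `ρ = ψψ†` are Hermitian, `α_ρ(x)` is real, so each summand equals
`α_ρ(x) α_σ(x) / 2ⁿ`; when `α_ρ(x) = 0` both sides vanish, the left one because `x / 0 = 0`.
The Pauli strings satisfy the completeness relation `Σ_x (P_x)_{ab} (P_x)_{cd} = 2ⁿ δ_{ad} δ_{bc}`,
i.e. `A = 2⁻ⁿ Σ_x tr(P_x A) P_x` for every matrix `A`; pairing this expansion of `ρ` with `σ`
gives `Σ_x α_ρ(x) α_σ(x) = 2ⁿ tr(ρσ)`.
-/

open Finset

lemma sum_pauli1_mul_pauli1 (a b c d : Fin 2) :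
    ∑ vw, pauli1 vw a b * pauli1 vw c d =
      2 * (if a = d then 1 else 0) * (if b = c then 1 else 0) := by
  fin_cases a <;> fin_cases b <;> fin_cases c <;> fin_cases d <;>
    simp [Fintype.sum_prod_type, pauli1] <;> ring_nf

lemma sum_pauliString_mul_pauliString {n : ℕ} (a b c d : Fin n → Fin 2) :
    ∑ x : Fin n → Bool × Bool, pauliString x a b * pauliString x c d =
      2 ^ n * (if a = d then 1 else 0) * (if b = c then 1 else 0) := by
  simp only [pauliString, of_apply, ← prod_mul_distrib]
  rw [← Fintype.prod_sum (fun i vw => pauli1 vw (a i) (b i) * pauli1 vw (c i) (d i))]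
  simp only [sum_pauli1_mul_pauli1, prod_mul_distrib, prod_const, prod_boole]
  simp [funext_iff]

lemma sum_trace_pauliString_mul_smul_pauliString {n : ℕ}
    (A : Matrix (Fin n → Fin 2) (Fin n → Fin 2) ℂ) :
    ∑ x : Fin n → Bool × Bool, trace (pauliString x * A) • pauliString x =
      (2 ^ n : ℂ) • A := by
  ext c d
  simp only [Matrix.sum_apply, Matrix.smul_apply, smul_eq_mul, trace, Matrix.diag, mul_apply,
    sum_mul]
  rw [sum_comm]
  simp only [sum_comm (γ := Fin n → Bool × Bool), mul_right_comm _ (A _ _), ← sum_mul,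
    sum_pauliString_mul_pauliString]
  simp [ite_mul]

lemma sum_trace_pauliString_mul_mul_trace_mul_pauliString {n : ℕ}
    (A B : Matrix (Fin n → Fin 2) (Fin n → Fin 2) ℂ) :
    ∑ x : Fin n → Bool × Bool, trace (pauliString x * A) * trace (B * pauliString x) =
      2 ^ n * trace (A * B) :=
  calc ∑ x : Fin n → Bool × Bool, trace (pauliString x * A) * trace (B * pauliString x)
      = trace (B * ∑ x : Fin n → Bool × Bool, trace (pauliString x * A) • pauliString x) := by
        simp only [mul_sum, mul_smul_comm, trace_sum, trace_smul, smul_eq_mul]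
    _ = 2 ^ n * trace (A * B) := by
        rw [sum_trace_pauliString_mul_smul_pauliString, mul_smul_comm, trace_smul,
          smul_eq_mul, trace_mul_comm]

lemma im_trace_mul_eq_zero {ι : Type*} [Fintype ι] {A B : Matrix ι ι ℂ}
    (hA : A.IsHermitian) (hB : B.IsHermitian) : (trace (A * B)).im = 0 := by
  rw [← Complex.conj_eq_iff_im, ← Complex.star_def, ← trace_conjTranspose,
    conjTranspose_mul, hA.eq, hB.eq, trace_mul_comm]

lemma sq_div_mul_div_self {K : Type*} [Field K] (a b c : K) :
    a ^ 2 / c * (b / a) = a * b / c := by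
  rcases eq_or_ne a 0 with rfl | ha
  · simp
  · field_simp

theorem asymmetric_estimator_identity_general (n : ℕ)
    (ψ : (Fin n → Fin 2) → ℂ)
    (σ : Matrix (Fin n → Fin 2) (Fin n → Fin 2) ℂ) :
    ∑ x : Fin n → Bool × Bool,
        ((alpha ψ x) ^ 2 / 2 ^ n) *
          ((Matrix.trace (σ * pauliString x)).re / alpha ψ x)
      = (Matrix.trace (outer ψ * σ)).re := by
  have summand (x : Fin n → Bool × Bool) :
      (alpha ψ x) ^ 2 / 2 ^ n * ((trace (σ * pauliString x)).re / alpha ψ x) =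
        (trace (pauliString x * outer ψ) * trace (σ * pauliString x)).re / 2 ^ n := by
    have alpha_real : (trace (pauliString x * outer ψ)).im = 0 :=
      im_trace_mul_eq_zero (pauliString_isHermitian x) (outer_isHermitian ψ)
    rw [alpha, sq_div_mul_div_self, Complex.mul_re, alpha_real, zero_mul, sub_zero]
  rw [sum_congr rfl fun x _ => summand x, ← sum_div, ← Complex.re_sum,
    sum_trace_pauliString_mul_mul_trace_mul_pauliString, ← Complex.ofReal_ofNat,
    ← Complex.ofReal_pow, Complex.re_ofReal_mul]
  field_simp

/-- Key identity of the asymmetric protocol (direct fidelity estimation):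
`Σ_x p_ρ(x)·(α_σ(x)/α_ρ(x)) = tr(ρσ)` for a pure state `ρ = ψψ†` and any
Hermitian `σ`. (Summands with `α_ρ(x) = 0` vanish, consistent with the
convention, since `p_ρ(x) = 0` and division by zero is zero in Lean.) -/
theorem asymmetric_estimator_identity (n : ℕ)
    (ψ : (Fin n → Fin 2) → ℂ)
    (hψ : ∑ a, Complex.normSq (ψ a) = 1)
    (σ : Matrix (Fin n → Fin 2) (Fin n → Fin 2) ℂ) (hσ : σ.IsHermitian) :
    ∑ x : Fin n → Bool × Bool,
        ((alpha ψ x) ^ 2 / 2 ^ n) *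
          ((Matrix.trace (σ * pauliString x)).re / alpha ψ x)
      = (Matrix.trace (outer ψ * σ)).re :=
  asymmetric_estimator_identity_general n ψ σ
end

section
/- Let ψ ∈ ℂ^{2^n} be a unit vector. Then |Σ_{i} ψ_i²|² = 2^{−n} · Σ_{x = ((v_1,w_1),…,(v_n,w_n))} (−1)^{Σ_i v_i·w_i} · tr(P_x ψψ†)², where the first sum is over the 2^n coordinates of ψ (so Σ_i ψ_i² is the squared-entry sum, and |Σ_i ψ_i²|² = |⟨ψ, ψ*⟩|² with ψ* the entrywise complex conjugate of ψ). -/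
open scoped Matrix Kronecker
open Matrix

lemma orth1 (a b c d : Fin 2) :
    ∑ vw : Bool × Bool, pauli1 vw a b * pauli1 vw d c
      = if a = c ∧ b = d then 2 else 0 := by
  fin_cases a <;> fin_cases b <;> fin_cases c <;> fin_cases d <;>
    simp [Fintype.sum_prod_type, pauli1, Matrix.mul_apply, Fin.sum_univ_two,
      Complex.ext_iff] <;> norm_num

lemma trans1 (vw : Bool × Bool) (a b : Fin 2) :
    pauli1 vw b a = (-1 : ℂ) ^ ((vw.1 && vw.2).toNat) * pauli1 vw a b := by
  rcases vw with ⟨v, w⟩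
  cases v <;> cases w <;> fin_cases a <;> fin_cases b <;>
    simp [pauli1, Matrix.mul_apply, Fin.sum_univ_two]

lemma conj1 (vw : Bool × Bool) (a b : Fin 2) :
    (starRingEnd ℂ) (pauli1 vw a b) = pauli1 vw b a := by
  rcases vw with ⟨v, w⟩
  cases v <;> cases w <;> fin_cases a <;> fin_cases b <;>
    simp [pauli1, Matrix.mul_apply, Fin.sum_univ_two]

lemma orthN {n : ℕ} (a b c d : Fin n → Fin 2) :
    ∑ x : Fin n → Bool × Bool,
        (∏ i, pauli1 (x i) (a i) (b i)) * (∏ i, pauli1 (x i) (d i) (c i))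
      = if a = c ∧ b = d then (2 : ℂ) ^ n else 0 := by
  have h1 : ∀ x : Fin n → Bool × Bool,
      (∏ i, pauli1 (x i) (a i) (b i)) * (∏ i, pauli1 (x i) (d i) (c i))
        = ∏ i, (pauli1 (x i) (a i) (b i) * pauli1 (x i) (d i) (c i)) := fun x =>
    (Finset.prod_mul_distrib).symm
  simp_rw [h1]
  have hps := Finset.prod_univ_sum (fun _ : Fin n => (Finset.univ : Finset (Bool × Bool)))
    (fun i vw => pauli1 vw (a i) (b i) * pauli1 vw (d i) (c i))
  rw [Fintype.piFinset_univ] at hps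
  rw [← hps]
  simp_rw [orth1]
  by_cases h : a = c ∧ b = d
  · rw [if_pos h]
    have : ∀ i : Fin n, (if a i = c i ∧ b i = d i then (2 : ℂ) else 0) = 2 := fun i =>
      if_pos ⟨congrFun h.1 i, congrFun h.2 i⟩
    simp_rw [this]
    simp
  · rw [if_neg h]
    have h2 : ¬ ∀ i, a i = c i ∧ b i = d i := by
      intro hh
      exact h ⟨funext fun i => (hh i).1, funext fun i => (hh i).2⟩
    push_neg at h2
    obtain ⟨i, hi⟩ := h2
    exact Finset.prod_eq_zero (Finset.mem_univ i) (if_neg (not_and.mpr hi))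

lemma trace_eq {n : ℕ} (ψ : (Fin n → Fin 2) → ℂ) (x : Fin n → Bool × Bool) :
    Matrix.trace (pauliString x * outer ψ)
      = ∑ p : (Fin n → Fin 2) × (Fin n → Fin 2),
          (∏ i, pauli1 (x i) (p.1 i) (p.2 i)) * (ψ p.2 * (starRingEnd ℂ) (ψ p.1)) := by
  rw [Fintype.sum_prod_type]
  simp [Matrix.trace, Matrix.mul_apply, pauliString, outer, Matrix.diag]

lemma trace_real {n : ℕ} (ψ : (Fin n → Fin 2) → ℂ) (x : Fin n → Bool × Bool) :
    (starRingEnd ℂ) (Matrix.trace (pauliString x * outer ψ))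
      = Matrix.trace (pauliString x * outer ψ) := by
  rw [trace_eq, map_sum]
  rw [← Equiv.sum_comp (Equiv.prodComm _ _)]
  refine Finset.sum_congr rfl fun p _ => ?_
  simp only [Equiv.prodComm_apply, Prod.fst_swap, Prod.snd_swap, _root_.map_mul, map_prod,
    conj1, Complex.conj_conj]
  ring

lemma signN {n : ℕ} (x : Fin n → Bool × Bool) (a b : Fin n → Fin 2) :
    (∏ i, pauli1 (x i) (b i) (a i))
      = (-1 : ℂ) ^ (∑ i, ((x i).1 && (x i).2).toNat) * ∏ i, pauli1 (x i) (a i) (b i) := by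
  calc ∏ i, pauli1 (x i) (b i) (a i)
      = ∏ i, ((-1 : ℂ) ^ (((x i).1 && (x i).2).toNat) * pauli1 (x i) (a i) (b i)) := by
        simp_rw [← trans1]
    _ = (∏ i, (-1 : ℂ) ^ (((x i).1 && (x i).2).toNat)) * ∏ i, pauli1 (x i) (a i) (b i) :=
        Finset.prod_mul_distrib
    _ = _ := by rw [Finset.prod_pow_eq_pow_sum]

lemma key {n : ℕ} (ψ : (Fin n → Fin 2) → ℂ) :
    ∑ x : Fin n → Bool × Bool,
        (-1 : ℂ) ^ (∑ i, ((x i).1 && (x i).2).toNat)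
          * (Matrix.trace (pauliString x * outer ψ)) ^ 2
      = 2 ^ n * ((∑ a, ψ a ^ 2) * (∑ a, (starRingEnd ℂ) (ψ a) ^ 2)) := by
  set g : (Fin n → Fin 2) × (Fin n → Fin 2) → ℂ :=
    fun p => ψ p.2 * (starRingEnd ℂ) (ψ p.1) with hg
  have step : ∀ x : Fin n → Bool × Bool,
      (-1 : ℂ) ^ (∑ i, ((x i).1 && (x i).2).toNat)
          * (Matrix.trace (pauliString x * outer ψ)) ^ 2
        = ∑ p : (Fin n → Fin 2) × (Fin n → Fin 2),
            ∑ q : (Fin n → Fin 2) × (Fin n → Fin 2),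
              ((∏ i, pauli1 (x i) (p.2 i) (p.1 i)) * (∏ i, pauli1 (x i) (q.1 i) (q.2 i)))
                * (g p * g q) := by
    intro x
    rw [sq, ← mul_assoc, trace_eq]
    have h1 : (-1 : ℂ) ^ (∑ i, ((x i).1 && (x i).2).toNat)
        * ∑ p : (Fin n → Fin 2) × (Fin n → Fin 2),
            (∏ i, pauli1 (x i) (p.1 i) (p.2 i)) * g p
        = ∑ p : (Fin n → Fin 2) × (Fin n → Fin 2),
            (∏ i, pauli1 (x i) (p.2 i) (p.1 i)) * g p := by
      rw [Finset.mul_sum]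
      exact Finset.sum_congr rfl fun p _ => by rw [signN x p.1 p.2]; ring
    rw [h1, Finset.sum_mul_sum]
    exact Finset.sum_congr rfl fun p _ => Finset.sum_congr rfl fun q _ => by ring
  simp_rw [step]
  rw [Finset.sum_comm]
  have step2 : ∀ p : (Fin n → Fin 2) × (Fin n → Fin 2),
      (∑ x : Fin n → Bool × Bool, ∑ q : (Fin n → Fin 2) × (Fin n → Fin 2),
          ((∏ i, pauli1 (x i) (p.2 i) (p.1 i)) * (∏ i, pauli1 (x i) (q.1 i) (q.2 i)))
            * (g p * g q))
        = 2 ^ n * g p ^ 2 := by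
    intro p
    rw [Finset.sum_comm]
    have h2 : ∀ q : (Fin n → Fin 2) × (Fin n → Fin 2),
        (∑ x : Fin n → Bool × Bool,
            ((∏ i, pauli1 (x i) (p.2 i) (p.1 i)) * (∏ i, pauli1 (x i) (q.1 i) (q.2 i)))
              * (g p * g q))
          = (if p.2 = q.2 ∧ p.1 = q.1 then (2 : ℂ) ^ n else 0) * (g p * g q) := by
      intro q
      rw [← Finset.sum_mul, orthN]
    simp_rw [h2]
    rw [Finset.sum_eq_single p]
    · rw [if_pos ⟨rfl, rfl⟩]; ring
    · intro q _ hq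
      rw [if_neg, zero_mul]
      rintro ⟨h1', h2'⟩
      exact hq (Prod.ext h2'.symm h1'.symm)
    · intro h; exact absurd (Finset.mem_univ p) h
  simp_rw [step2]
  rw [← Finset.mul_sum]
  congr 1
  rw [Fintype.sum_prod_type, Finset.sum_comm, Finset.sum_mul_sum]
  refine Finset.sum_congr rfl fun b _ => Finset.sum_congr rfl fun a _ => ?_
  simp only [hg, mul_pow]

/-- Imaginarity in the Pauli basis:
`|Σ_i ψ_i²|² = 2^{−n} Σ_x (−1)^{#Y(x)} tr(P_x ψψ†)²`, where `#Y(x) = Σ_i v_i w_i`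
counts the number of `Y` factors in `P_x`. -/
theorem imaginarity_pauli_expansion (n : ℕ) (ψ : (Fin n → Fin 2) → ℂ)
    (hψ : ∑ a, Complex.normSq (ψ a) = 1) :
    Complex.normSq (∑ a, (ψ a) ^ 2) =
      (2 ^ n : ℝ)⁻¹ * ∑ x : Fin n → Bool × Bool,
        (-1 : ℝ) ^ (∑ i, (x i).1.toNat * (x i).2.toNat) * (alpha ψ x) ^ 2 := by
  have hb : ∀ v w : Bool, v.toNat * w.toNat = (v && w).toNat := by decide
  have hcast : ((∑ x : Fin n → Bool × Bool,
      (-1 : ℝ) ^ (∑ i, (x i).1.toNat * (x i).2.toNat) * (alpha ψ x) ^ 2 : ℝ) : ℂ)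
      = ∑ x : Fin n → Bool × Bool,
          (-1 : ℂ) ^ (∑ i, ((x i).1 && (x i).2).toNat)
            * (Matrix.trace (pauliString x * outer ψ)) ^ 2 := by
    push_cast
    refine Finset.sum_congr rfl fun x _ => ?_
    conv_rhs => rw [← Complex.conj_eq_iff_re.mp (trace_real ψ x)]
    simp_rw [hb, alpha]
  have hkey := key ψ
  have hconj : (∑ a, (starRingEnd ℂ) (ψ a) ^ 2)
      = (starRingEnd ℂ) (∑ a, (ψ a) ^ 2) := by
    rw [map_sum]; exact Finset.sum_congr rfl fun a _ => (map_pow _ _ _).symm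
  rw [hconj, Complex.mul_conj] at hkey
  rw [← hcast] at hkey
  have h2n : ((2 : ℂ) ^ n) = ((2 ^ n : ℝ) : ℂ) := by push_cast; ring
  rw [h2n, ← Complex.ofReal_mul] at hkey
  rw [Complex.ofReal_injective hkey, inv_mul_cancel_left₀ (pow_ne_zero n two_ne_zero)]
end

section
/- Let n = a + b with a, b ≥ 0, let ψ ∈ ℂ^{2^a} ⊗ ℂ^{2^b} be a unit vector, set ρ = ψψ† (a 2^n × 2^n matrix under the identification ℂ^{2^a} ⊗ ℂ^{2^b} ≅ ℂ^{2^n}), and define the partial trace ρ_A ∈ M_{2^a}(ℂ) entrywise by (ρ_A)_{i,j} = Σ_{k < 2^b} ρ_{(i,k),(j,k)}. Then for every a-qubit Pauli string P_{x_A} (x_A ∈ ({0,1}²)^a): Σ_{x_B ∈ ({0,1}²)^b} tr(ρ·(P_{x_A} ⊗ P_{x_B}))² = 2^b · tr(ρ_A P_{x_A} ρ_A P_{x_A}). -/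
open scoped Matrix Kronecker
open Matrix

lemma pauli1_conj (vw : Bool × Bool) (l k : Fin 2) :
    (starRingEnd ℂ) (pauli1 vw l k) = pauli1 vw k l := by
  obtain ⟨v, w⟩ := vw
  cases v <;> cases w <;> fin_cases l <;> fin_cases k <;>
    simp [pauli1, Matrix.mul_apply, Fin.sum_univ_two]

lemma pauli1_sum (l k l' k' : Fin 2) :
    ∑ vw : Bool × Bool, pauli1 vw l k * pauli1 vw l' k' =
      2 * (if l = k' ∧ k = l' then 1 else 0) := by
  fin_cases l <;> fin_cases k <;> fin_cases l' <;> fin_cases k' <;>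
    simp [Fintype.sum_prod_type, pauli1, Matrix.mul_apply, Fin.sum_univ_two] <;> norm_num

lemma pauliString_conj {n : ℕ} (x : Fin n → Bool × Bool) (i j : Fin n → Fin 2) :
    (starRingEnd ℂ) (pauliString x i j) = pauliString x j i := by
  simp only [pauliString, Matrix.of_apply, map_prod, pauli1_conj]

lemma pauliString_sum {n : ℕ} (l k l' k' : Fin n → Fin 2) :
    ∑ x : Fin n → Bool × Bool, pauliString x l k * pauliString x l' k' =
      2 ^ n * (if l = k' ∧ k = l' then 1 else 0) := by
  have : ∀ x : Fin n → Bool × Bool,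
      pauliString x l k * pauliString x l' k' =
        ∏ i, (pauli1 (x i) (l i) (k i) * pauli1 (x i) (l' i) (k' i)) := by
    intro x; simp [pauliString, Finset.prod_mul_distrib]
  simp only [this]
  rw [← Fintype.prod_sum (fun i vw => pauli1 vw (l i) (k i) * pauli1 vw (l' i) (k' i))]
  simp only [pauli1_sum]
  rw [Finset.prod_mul_distrib, Finset.prod_const, Finset.prod_boole]
  simp only [Finset.card_univ, Fintype.card_fin, Finset.mem_univ, forall_true_left]
  congr 1
  by_cases h : l = k' ∧ k = l'
  · rw [if_pos h, if_pos]
    intro i; exact ⟨congrFun h.1 i, congrFun h.2 i⟩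
  · rw [if_neg h, if_neg]
    intro hc
    exact h ⟨funext fun i => (hc i).1, funext fun i => (hc i).2⟩

lemma trace_pauli_pair {m : ℕ} (M N : Matrix (Fin m → Fin 2) (Fin m → Fin 2) ℂ) :
    ∑ x : Fin m → Bool × Bool,
        Matrix.trace (M * pauliString x) * Matrix.trace (N * pauliString x)
      = 2 ^ m * Matrix.trace (M * N) := by
  classical
  have htr : ∀ (P : Matrix (Fin m → Fin 2) (Fin m → Fin 2) ℂ) x,
      Matrix.trace (P * pauliString x)
        = ∑ z : (Fin m → Fin 2) × (Fin m → Fin 2), P z.1 z.2 * pauliString x z.2 z.1 := by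
    intro P x
    rw [Fintype.sum_prod_type]
    simp [Matrix.trace, Matrix.diag, Matrix.mul_apply]
  simp only [htr, Finset.sum_mul_sum]
  rw [Finset.sum_comm]
  have hinner : ∀ z w : (Fin m → Fin 2) × (Fin m → Fin 2),
      ∑ x : Fin m → Bool × Bool,
          (M z.1 z.2 * pauliString x z.2 z.1) * (N w.1 w.2 * pauliString x w.2 w.1)
        = (M z.1 z.2 * N w.1 w.2) * (2 ^ m * (if (z.2, z.1) = w then 1 else 0)) := by
    intro z w
    have : ∀ x : Fin m → Bool × Bool,
        (M z.1 z.2 * pauliString x z.2 z.1) * (N w.1 w.2 * pauliString x w.2 w.1)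
          = (M z.1 z.2 * N w.1 w.2) * (pauliString x z.2 z.1 * pauliString x w.2 w.1) := by
      intro x; ring
    rw [Finset.sum_congr rfl fun x _ => this x, ← Finset.mul_sum, pauliString_sum]
    congr 2
    simp [Prod.ext_iff]
  calc ∑ z : (Fin m → Fin 2) × (Fin m → Fin 2), ∑ x : Fin m → Bool × Bool,
          ∑ w : (Fin m → Fin 2) × (Fin m → Fin 2),
          (M z.1 z.2 * pauliString x z.2 z.1) * (N w.1 w.2 * pauliString x w.2 w.1)
      = ∑ z : (Fin m → Fin 2) × (Fin m → Fin 2),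
          ∑ w : (Fin m → Fin 2) × (Fin m → Fin 2),
          (M z.1 z.2 * N w.1 w.2) * (2 ^ m * (if (z.2, z.1) = w then 1 else 0)) := by
        refine Finset.sum_congr rfl fun z _ => ?_
        rw [Finset.sum_comm]
        exact Finset.sum_congr rfl fun w _ => hinner z w
    _ = 2 ^ m * Matrix.trace (M * N) := by
        simp only [mul_ite, mul_one, mul_zero, Finset.sum_ite_eq, Finset.mem_univ, if_true]
        rw [Fintype.sum_prod_type]
        simp only [Matrix.trace, Matrix.diag, Matrix.mul_apply, Finset.mul_sum]
        exact Finset.sum_congr rfl fun k _ => Finset.sum_congr rfl fun l _ => by ring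

lemma trace_mul_sum {ι : Type} [Fintype ι] (A B : Matrix ι ι ℂ) :
    Matrix.trace (A * B) = ∑ z : ι × ι, A z.1 z.2 * B z.2 z.1 := by
  rw [Fintype.sum_prod_type]
  simp [Matrix.trace, Matrix.diag, Matrix.mul_apply]

set_option maxHeartbeats 1000000 in
/-- Marginals of the Pauli distribution of a pure state via the partial trace:
`Σ_{x_B} tr(ρ(P_{x_A} ⊗ P_{x_B}))² = 2^b · tr(ρ_A P_{x_A} ρ_A P_{x_A})` where
`ρ = ψψ†` and `ρ_A` is the partial trace of `ρ` over the second factor. -/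
theorem pauli_marginal_partial_trace (a b : ℕ)
    (ψ : (Fin a → Fin 2) × (Fin b → Fin 2) → ℂ)
    (hψ : ∑ p, Complex.normSq (ψ p) = 1)
    (ρA : Matrix (Fin a → Fin 2) (Fin a → Fin 2) ℂ)
    (hρA : ρA = Matrix.of fun i j => ∑ k, ψ (i, k) * (starRingEnd ℂ) (ψ (j, k)))
    (xA : Fin a → Bool × Bool) :
    ∑ xB : Fin b → Bool × Bool,
        ((Matrix.trace (outer ψ * (pauliString xA ⊗ₖ pauliString xB))).re) ^ 2
      = 2 ^ b * (Matrix.trace (ρA * pauliString xA * ρA * pauliString xA)).re := by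
  classical
  subst hρA
  -- the "conditional" matrix M on system B
  set M : Matrix (Fin b → Fin 2) (Fin b → Fin 2) ℂ := Matrix.of (fun k l => ∑ y : (Fin a → Fin 2) × (Fin a → Fin 2),
      pauliString xA y.2 y.1 * (ψ (y.1, k) * (starRingEnd ℂ) (ψ (y.2, l)))) with hM
  have hT : ∀ xB : Fin b → Bool × Bool,
      Matrix.trace (outer ψ * (pauliString xA ⊗ₖ pauliString xB))
        = Matrix.trace (M * pauliString xB) := by
    intro xB
    rw [trace_mul_sum, trace_mul_sum]
    have expand : ∀ w : (Fin b → Fin 2) × (Fin b → Fin 2), M w.1 w.2 * pauliString xB w.2 w.1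
        = ∑ y : (Fin a → Fin 2) × (Fin a → Fin 2), pauliString xA y.2 y.1 * (ψ (y.1, w.1) * (starRingEnd ℂ) (ψ (y.2, w.2)))
            * pauliString xB w.2 w.1 := by
      intro w
      rw [hM, Matrix.of_apply, Finset.sum_mul]
    rw [Finset.sum_congr rfl fun w _ => expand w, ← Fintype.sum_prod_type']
    refine Fintype.sum_equiv
      (Equiv.mk (fun z : ((Fin a → Fin 2) × (Fin b → Fin 2)) × ((Fin a → Fin 2) × (Fin b → Fin 2)) => ((z.1.2, z.2.2), (z.1.1, z.2.1)))
        (fun w : ((Fin b → Fin 2) × (Fin b → Fin 2)) × ((Fin a → Fin 2) × (Fin a → Fin 2)) => ((w.2.1, w.1.1), (w.2.2, w.1.2)))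
        (by rintro ⟨⟨_, _⟩, ⟨_, _⟩⟩; rfl) (by rintro ⟨⟨_, _⟩, ⟨_, _⟩⟩; rfl))
      _ _ (fun z => ?_)
    obtain ⟨⟨p1, p2⟩, ⟨q1, q2⟩⟩ := z
    simp only [Equiv.coe_fn_mk]
    show outer ψ (p1, p2) (q1, q2) * (pauliString xA ⊗ₖ pauliString xB) (q1, q2) (p1, p2)
      = pauliString xA q1 p1 * (ψ (p1, p2) * (starRingEnd ℂ) (ψ (q1, q2))) * pauliString xB q2 p2
    rw [outer, Matrix.of_apply, Matrix.kroneckerMap_apply]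
    ring
  have sum3 : ∀ {α β γ : Type} [Fintype α] [Fintype β] [Fintype γ] (f : α → β → γ → ℂ),
      ∑ s : α × β × γ, f s.1 s.2.1 s.2.2 = ∑ x, ∑ y, ∑ z, f x y z := by
    intro α β γ _ _ _ f
    rw [Fintype.sum_prod_type]
    exact Finset.sum_congr rfl fun x _ => Fintype.sum_prod_type _
  have hMH : Mᴴ = M := by
    ext k l
    rw [Matrix.conjTranspose_apply, hM, Matrix.of_apply, Matrix.of_apply, Complex.star_def,
      map_sum]
    refine Fintype.sum_equiv (Equiv.prodComm (Fin a → Fin 2) (Fin a → Fin 2)) _ _ fun y => ?_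
    obtain ⟨i, j⟩ := y
    simp only [Equiv.prodComm_apply, Prod.swap, _root_.map_mul, pauliString_conj, Complex.conj_conj]
    ring
  have hTconj : ∀ xB : Fin b → Bool × Bool,
      (starRingEnd ℂ) (Matrix.trace (M * pauliString xB))
        = Matrix.trace (Mᴴ * pauliString xB) := by
    intro xB
    rw [trace_mul_sum, trace_mul_sum, map_sum]
    refine Fintype.sum_equiv (Equiv.prodComm (Fin b → Fin 2) (Fin b → Fin 2)) _ _ fun z => ?_
    obtain ⟨k, l⟩ := z
    simp only [Equiv.prodComm_apply, Prod.swap, _root_.map_mul, pauliString_conj,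
      Matrix.conjTranspose_apply, Complex.star_def]
  have hTreal : ∀ xB : Fin b → Bool × Bool,
      (starRingEnd ℂ) (Matrix.trace (outer ψ * (pauliString xA ⊗ₖ pauliString xB)))
        = Matrix.trace (outer ψ * (pauliString xA ⊗ₖ pauliString xB)) := by
    intro xB
    rw [hT xB, hTconj xB, hMH]
  have hfinal : Matrix.trace (M * Mᴴ)
      = Matrix.trace ((Matrix.of fun i j => ∑ k, ψ (i, k) * (starRingEnd ℂ) (ψ (j, k)))
          * pauliString xA
          * (Matrix.of fun i j => ∑ k, ψ (i, k) * (starRingEnd ℂ) (ψ (j, k)))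
          * pauliString xA) := by
    rw [hMH]
    rw [trace_mul_sum, trace_mul_sum]
    simp only [hM, Matrix.mul_apply, Matrix.of_apply, Finset.sum_mul, Finset.mul_sum,
      Finset.sum_mul_sum, Fintype.sum_prod_type]
    rw [← Fintype.sum_prod_type', ← Fintype.sum_prod_type', ← Fintype.sum_prod_type',
      ← Fintype.sum_prod_type', ← Fintype.sum_prod_type']
    rw [← Fintype.sum_prod_type', ← Fintype.sum_prod_type', ← Fintype.sum_prod_type',
      ← Fintype.sum_prod_type', ← Fintype.sum_prod_type']
    refine Fintype.sum_equiv (Equiv.mk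
      (fun t : (((((Fin b → Fin 2) × (Fin b → Fin 2)) × (Fin a → Fin 2)) × (Fin a → Fin 2)) ×
          (Fin a → Fin 2)) × (Fin a → Fin 2) =>
        (((((t.1.2, t.2), t.1.1.1.2), t.1.1.1.1.2), t.1.1.2), t.1.1.1.1.1))
      (fun s : (((((Fin a → Fin 2) × (Fin a → Fin 2)) × (Fin a → Fin 2)) × (Fin b → Fin 2)) ×
          (Fin a → Fin 2)) × (Fin b → Fin 2) =>
        (((((s.2, s.1.1.2), s.1.1.1.2), s.1.2), s.1.1.1.1.1), s.1.1.1.1.2))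
      (by rintro ⟨⟨⟨⟨⟨k, l⟩, A2⟩, A3⟩, A4⟩, A5⟩; rfl)
      (by rintro ⟨⟨⟨⟨⟨B0, B1⟩, B2⟩, B3⟩, B4⟩, B5⟩; rfl)) _ _ fun t => ?_
    obtain ⟨⟨⟨⟨⟨k, l⟩, A2⟩, A3⟩, A4⟩, A5⟩ := t
    simp only [Equiv.coe_fn_mk]
    ring
  calc ∑ xB : Fin b → Bool × Bool,
        ((Matrix.trace (outer ψ * (pauliString xA ⊗ₖ pauliString xB))).re) ^ 2
      = ∑ xB : Fin b → Bool × Bool,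
          (Matrix.trace (outer ψ * (pauliString xA ⊗ₖ pauliString xB)) *
            (starRingEnd ℂ) (Matrix.trace (outer ψ * (pauliString xA ⊗ₖ pauliString xB)))).re := by
        refine Finset.sum_congr rfl fun xB _ => ?_
        have him := Complex.conj_eq_iff_im.mp (hTreal xB)
        rw [Complex.mul_conj]
        simp [Complex.normSq_apply, him]
        ring
    _ = (∑ xB : Fin b → Bool × Bool,
          Matrix.trace (M * pauliString xB) * Matrix.trace (Mᴴ * pauliString xB)).re := by
        rw [Complex.re_sum]
        exact Finset.sum_congr rfl fun xB _ => by rw [hT xB, hTconj xB]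
    _ = ((2 ^ b : ℂ) * Matrix.trace (M * Mᴴ)).re := by rw [trace_pauli_pair]
    _ = 2 ^ b * (Matrix.trace ((Matrix.of fun i j => ∑ k, ψ (i, k) * (starRingEnd ℂ) (ψ (j, k)))
          * pauliString xA
          * (Matrix.of fun i j => ∑ k, ψ (i, k) * (starRingEnd ℂ) (ψ (j, k)))
          * pauliString xA)).re := by
        rw [hfinal, Complex.mul_re]
        have h2 : ((2 : ℂ) ^ b) = (((2 : ℝ) ^ b : ℝ) : ℂ) := by push_cast; ring
        rw [h2, Complex.ofReal_re, Complex.ofReal_im]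
        ring
end

section
/- Let d ≥ 1, let U : Fin (d²) → M_d(ℂ) be a family of unitary matrices satisfying tr(U_j† U_k) = d·δ_{jk}, and let ψ ∈ ℂ^d ⊗ ℂ^d be a unit vector such that for every j the rank-one projection is invariant: (U_j ⊗ U_j)·ψψ†·(U_j ⊗ U_j)† = ψψ†. Then ψ is maximally entangled: for all i, j < d, Σ_{k < d} ψ_{(i,k)} · conj(ψ_{(j,k)}) = (1/d)·δ_{ij}, i.e., the partial trace of ψψ† over the second tensor factor equals I/d. -/
open scoped Matrix Kronecker
open Matrix

/-!
Conjugating `ψψ†` by `U ⊗ U` conjugates its partial trace `ρ` over the second factor by `U`,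
so `ρ` commutes with every `U_j`. The `U_j` are orthogonal for the Hilbert–Schmidt pairing,
hence linearly independent, and being `d²` of them they span `M_d(ℂ)`. So `ρ` lies in the
centre of `M_d(ℂ)`, i.e. `ρ = c • 1`, and `tr ρ = ‖ψ‖² = 1` forces `c = 1/d`.
-/

namespace Matrix

variable {l m n R : Type*} [Fintype m] [Fintype n]

def partialTraceRight [AddCommMonoid R] (P : Matrix (l × n) (m × n) R) : Matrix l m R :=
  of fun a c => ∑ b, P (a, b) (c, b)

theorem trace_partialTraceRight [AddCommMonoid R] (P : Matrix (m × n) (m × n) R) :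
    trace (partialTraceRight P) = trace P := by
  simp [trace, partialTraceRight, Fintype.sum_prod_type]

theorem trace_kronecker_one_mul [Fintype l] [DecidableEq n] [Semiring R]
    (X : Matrix l m R) (P : Matrix (m × n) (l × n) R) :
    trace ((X ⊗ₖ (1 : Matrix n n R)) * P) = trace (X * partialTraceRight P) := by
  simp only [trace, diag, mul_apply, kroneckerMap_apply, Fintype.sum_prod_type,
    partialTraceRight, of_apply, one_apply, mul_ite, ite_mul, mul_one, mul_zero, zero_mul,
    Finset.sum_ite_eq, Finset.mem_univ, if_true, Finset.mul_sum]
  exact Finset.sum_congr rfl fun _ _ => Finset.sum_comm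

theorem partialTraceRight_kronecker_mul_mul_kronecker [Fintype l] [DecidableEq n] [CommSemiring R]
    {A : Matrix l m R} {C : Matrix m l R} {B D : Matrix n n R} (hDB : D * B = 1)
    (P : Matrix (m × n) (m × n) R) :
    partialTraceRight ((A ⊗ₖ B) * P * (C ⊗ₖ D)) = A * partialTraceRight P * C := by
  refine ext_iff_trace_mul_left.mpr fun X => ?_
  calc trace (X * partialTraceRight ((A ⊗ₖ B) * P * (C ⊗ₖ D)))
      = trace ((C ⊗ₖ D) * ((X ⊗ₖ (1 : Matrix n n R)) * (A ⊗ₖ B) * P)) := by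
        rw [← trace_kronecker_one_mul, trace_mul_comm (C ⊗ₖ D)]
        simp only [Matrix.mul_assoc]
    _ = trace (C * (X * A) * partialTraceRight P) := by
        rw [← Matrix.mul_assoc, ← mul_kronecker_mul, ← mul_kronecker_mul, Matrix.one_mul, hDB,
          trace_kronecker_one_mul]
    _ = trace (X * (A * partialTraceRight P * C)) := by
        rw [trace_mul_comm, ← Matrix.mul_assoc, trace_mul_comm]
        simp only [Matrix.mul_assoc]

theorem linearIndependent_of_trace_conjTranspose_mul {ι K : Type*} [Fintype ι] [Field K]
    [StarRing K] {U : ι → Matrix n n K} (hne : ∀ j, trace ((U j)ᴴ * U j) ≠ 0)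
    (horth : Pairwise fun j k => trace ((U j)ᴴ * U k) = 0) : LinearIndependent K U := by
  refine Fintype.linearIndependent_iff.mpr fun g hg k => ?_
  have hk : trace ((U k)ᴴ * ∑ j, g j • U j) = g k * trace ((U k)ᴴ * U k) := by
    simp only [Matrix.mul_sum, Matrix.mul_smul, trace_sum, trace_smul, smul_eq_mul]
    exact Finset.sum_eq_single k (fun j _ hjk => by rw [horth hjk.symm, mul_zero])
      (by simp)
  rw [hg, Matrix.mul_zero, trace_zero, eq_comm] at hk
  exact (mul_eq_zero.mp hk).resolve_right (hne k)

theorem mem_range_scalar_of_commute_of_span_eq_top [DecidableEq n] [CommSemiring R]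
    {s : Set (Matrix n n R)} (hs : Submodule.span R s = ⊤) {M : Matrix n n R}
    (hM : ∀ X ∈ s, Commute X M) : M ∈ Set.range (scalar n) := by
  have hspan : ∀ X ∈ Submodule.span R s, Commute X M := fun X hX => by
    induction hX using Submodule.span_induction with
    | mem X hX => exact hM X hX
    | zero => exact Commute.zero_left M
    | add X Y _ _ hX hY => exact hX.add_left hY
    | smul c X _ hX => exact hX.smul_left c
  exact mem_range_scalar_iff_commute_single'.mpr fun i j => hspan _ (hs ▸ Submodule.mem_top)

end Matrix

theorem commute_of_mul_mul_eq_self {M : Type*} [Monoid M] {a b m : M} (hba : b * a = 1)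
    (h : a * m * b = m) : Commute a m :=
  calc a * m = a * m * (b * a) := by rw [hba, mul_one]
    _ = m * a := by rw [← mul_assoc, h]

theorem trace_outer {ι : Type} [Fintype ι] (ψ : ι → ℂ) :
    trace (outer ψ) = ∑ p, (Complex.normSq (ψ p) : ℂ) := by
  simp [trace, outer, Complex.mul_conj]

theorem invariant_implies_maximally_entangled_general (d : ℕ)
    (U : Fin (d ^ 2) → Matrix (Fin d) (Fin d) ℂ)
    (hUunit : ∀ j, (U j)ᴴ * U j = 1)
    (htr : ∀ j k, Matrix.trace ((U j)ᴴ * U k) = if j = k then (d : ℂ) else 0)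
    (ψ : Fin d × Fin d → ℂ) (hψ : ∑ p, Complex.normSq (ψ p) = 1)
    (hinv : ∀ j, (U j ⊗ₖ U j) * outer ψ * (U j ⊗ₖ U j)ᴴ = outer ψ) :
    ∀ i j, ∑ k, ψ (i, k) * (starRingEnd ℂ) (ψ (j, k))
      = if i = j then ((d : ℂ))⁻¹ else 0 := by
  set ρ := partialTraceRight (outer ψ)
  have hcomm : ∀ j, Commute (U j) ρ := fun j => commute_of_mul_mul_eq_self (hUunit j) <| by
    rw [← partialTraceRight_kronecker_mul_mul_kronecker (hUunit j), ← conjTranspose_kronecker,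
      hinv j]
  have hindep : LinearIndependent ℂ U := by
    refine linearIndependent_of_trace_conjTranspose_mul (fun j => ?_) fun j k hjk => ?_
    · rw [htr, if_pos rfl, Nat.cast_ne_zero]
      exact fun hd => by simpa [hd] using j.pos
    · exact (htr j k).trans (if_neg hjk)
  have hspan : Submodule.span ℂ (Set.range U) = ⊤ :=
    hindep.span_eq_top_of_card_eq_finrank' (by simp [Module.finrank_matrix, sq])
  obtain ⟨c, hc⟩ :=
    mem_range_scalar_of_commute_of_span_eq_top hspan (Set.forall_mem_range.mpr hcomm)
  have htrρ : trace ρ = 1 := by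
    rw [trace_partialTraceRight, trace_outer, ← Complex.ofReal_sum, hψ, Complex.ofReal_one]
  have hdc : (d : ℂ) * c = 1 := by simpa [← hc] using htrρ
  intro i j
  have hρ : ρ i j = if i = j then ((d : ℂ))⁻¹ else 0 := by
    rw [← hc, eq_inv_of_mul_eq_one_right hdc]
    simp [diagonal_apply]
  simpa [ρ, partialTraceRight, outer] using hρ

/-- If `ψψ†` is invariant under `U_j ⊗ U_j` for all members of a Hilbert–Schmidt
orthonormal family of `d²` unitaries, then `ψ` is maximally entangled: the partial
trace of `ψψ†` over the second factor is `I/d`. -/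
theorem invariant_implies_maximally_entangled (d : ℕ) (hd : 1 ≤ d)
    (U : Fin (d ^ 2) → Matrix (Fin d) (Fin d) ℂ)
    (hUunit : ∀ j, (U j)ᴴ * U j = 1)
    (htr : ∀ j k, Matrix.trace ((U j)ᴴ * U k) = if j = k then (d : ℂ) else 0)
    (ψ : Fin d × Fin d → ℂ) (hψ : ∑ p, Complex.normSq (ψ p) = 1)
    (hinv : ∀ j, (U j ⊗ₖ U j) * outer ψ * (U j ⊗ₖ U j)ᴴ = outer ψ) :
    ∀ i j, ∑ k, ψ (i, k) * (starRingEnd ℂ) (ψ (j, k))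
      = if i = j then ((d : ℂ))⁻¹ else 0 :=
  invariant_implies_maximally_entangled_general d U hUunit htr ψ hψ hinv
end
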